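/- For every integer n ≥ 1, p_{2n,μ}(1,-1) = (2μ/n)·Σ_{k=0}^{n-1} C_μ(2n, 2k+1), i.e. the alternating sum of the μ-deformed binomial coefficients of upper index 2n equals 2μ/n times the sum of the odd-indexed ones. -/

import Mathlib

open Finset

/-- The μ-deformed factorial function γ_μ. -/
noncomputable def gammaMu (μ : ℝ) : ℕ → ℝ
  | 0 => 1
  | n + 1 => ((n + 1 : ℝ) + 2 * μ * (if Odd (n + 1) then 1 else 0)) * gammaMu μ n

/-- The μ-deformed binomial coefficient C_μ(n,k), zero outside 0 ≤ k ≤ n. -/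
noncomputable def binomMu (μ : ℝ) (n : ℕ) (k : ℤ) : ℝ :=
  if 0 ≤ k ∧ k ≤ (n : ℤ) then gammaMu μ n / (gammaMu μ (n - k.toNat) * gammaMu μ k.toNat) else 0

/-- The n-th μ-deformed binomial polynomial p_{n,μ}(x,y). -/
noncomputable def pMu (μ : ℝ) (n : ℕ) (x y : ℂ) : ℂ :=
  ∑ k ∈ Finset.range (n + 1), (binomMu μ n k : ℂ) * x ^ k * y ^ (n - k)

/-- The μ-deformed exponential function. -/
noncomputable def expMu (μ : ℝ) (z : ℂ) : ℂ :=
  ∑' n : ℕ, z ^ n / (gammaMu μ n : ℂ)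

/-- The Bessel function of the first kind of order ν, for positive real argument. -/
noncomputable def besselJ (ν x : ℝ) : ℝ :=
  ∑' m : ℕ, ((-1) ^ m / (Nat.factorial m * Real.Gamma (ν + m + 1))) * (x / 2) ^ ((2 * m : ℝ) + ν)

/-!
Write `[k]_μ = k + 2μθ(k)`, so `γ_μ(k) = [k]_μ γ_μ(k - 1)`, and `c_k = C_μ(2n, k)`. The absorption
identity `[k + 1]_μ c_{k+1} = [2n - k]_μ c_k`, multiplied by `(-1)^k` and summed over `k`, gives
`∑ (-1)^k ([k]_μ + [2n - k]_μ) c_k = 0` (the boundary terms vanish as `[0]_μ = 0` and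
`c_{2n+1} = 0`). Since `k` and `2n - k` have the same parity, `[k]_μ + [2n - k]_μ = 2n + 4μθ(k)`,
which turns this into `2n ∑ (-1)^k c_k = 4μ ∑_{k odd} c_k`.
-/

noncomputable def natMu (μ : ℝ) (n : ℕ) : ℝ :=
  n + 2 * μ * (if Odd n then 1 else 0)

@[simp]
lemma natMu_zero (μ : ℝ) : natMu μ 0 = 0 := by
  simp [natMu]

lemma natMu_pos {μ : ℝ} (hμ : -(1 / 2 : ℝ) < μ) {n : ℕ} (hn : n ≠ 0) : 0 < natMu μ n := by
  have : (1 : ℝ) ≤ n := by exact_mod_cast Nat.one_le_iff_ne_zero.mpr hn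
  unfold natMu
  split_ifs <;> linarith

lemma natMu_add_natMu_sub (μ : ℝ) {n k : ℕ} (hk : k ≤ 2 * n) :
    natMu μ k + natMu μ (2 * n - k) = 2 * n + 4 * μ * (if Odd k then 1 else 0) := by
  have hodd : Odd (2 * n - k) ↔ Odd k := by
    simp only [Nat.odd_iff]
    omega
  unfold natMu
  rw [Nat.cast_sub hk, if_congr hodd rfl rfl]
  push_cast
  ring

lemma gammaMu_succ (μ : ℝ) (n : ℕ) : gammaMu μ (n + 1) = natMu μ (n + 1) * gammaMu μ n := by
  rw [gammaMu, natMu, Nat.cast_succ]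

lemma gammaMu_pos {μ : ℝ} (hμ : -(1 / 2 : ℝ) < μ) : ∀ n, 0 < gammaMu μ n
  | 0 => by simp [gammaMu]
  | n + 1 => by
    rw [gammaMu_succ]
    exact mul_pos (natMu_pos hμ n.succ_ne_zero) (gammaMu_pos hμ n)

lemma binomMu_add_natCast (μ : ℝ) (a b : ℕ) :
    binomMu μ (a + b) b = gammaMu μ (a + b) / (gammaMu μ a * gammaMu μ b) := by
  simp [binomMu]

lemma binomMu_natCast_of_lt (μ : ℝ) {n k : ℕ} (h : n < k) : binomMu μ n k = 0 := by
  rw [binomMu, if_neg]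
  omega

/-- Absorption identity: both sides equal `γ_μ(n) / (γ_μ(n - k - 1) γ_μ(k))`. -/
lemma natMu_mul_binomMu_succ {μ : ℝ} (hμ : -(1 / 2 : ℝ) < μ) (n k : ℕ) :
    natMu μ (k + 1) * binomMu μ n ↑(k + 1) = natMu μ (n - k) * binomMu μ n k := by
  rcases lt_or_ge k n with hk | hk
  · obtain ⟨a, rfl⟩ : ∃ a, n = a + (k + 1) := ⟨n - (k + 1), by omega⟩
    have hsub : a + (k + 1) - k = a + 1 := by omega
    rw [binomMu_add_natCast, hsub, show a + (k + 1) = (a + 1) + k by ring, binomMu_add_natCast,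
      gammaMu_succ μ k, gammaMu_succ μ a]
    have := gammaMu_pos hμ
    have := natMu_pos hμ k.succ_ne_zero
    have := natMu_pos hμ a.succ_ne_zero
    field_simp
  · rw [Nat.sub_eq_zero_of_le hk, natMu_zero, binomMu_natCast_of_lt μ (by omega)]
    simp

lemma sum_range_neg_one_pow_mul_succ {R : Type*} [CommRing R] (f : ℕ → R) {N : ℕ}
    (h₀ : f 0 = 0) (hN : f (N + 1) = 0) :
    ∑ k ∈ range (N + 1), (-1) ^ k * f (k + 1) = -∑ k ∈ range (N + 1), (-1) ^ k * f k := by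
  have h := sum_range_succ' (fun k ↦ (-1 : R) ^ k * f k) (N + 1)
  rw [sum_range_succ, hN, h₀] at h
  simp only [pow_succ, mul_zero, add_zero, mul_neg_one, neg_mul] at h
  rw [h, sum_neg_distrib, neg_neg]

lemma sum_range_two_mul_succ_ite_odd {M : Type*} [AddCommMonoid M] (f : ℕ → M) (n : ℕ) :
    ∑ k ∈ range (2 * n + 1), (if Odd k then f k else 0) = ∑ j ∈ range n, f (2 * j + 1) := by
  induction n with
  | zero => simp
  | succ n ih =>
    rw [show 2 * (n + 1) + 1 = 2 * n + 1 + 1 + 1 by ring, sum_range_succ, sum_range_succ, ih,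
      sum_range_succ]
    have hodd : Odd (2 * n + 1) := odd_two_mul_add_one n
    have heven : ¬ Odd (2 * n + 1 + 1) := by simp [parity_simps]
    simp [hodd, heven]

lemma pMu_two_mul_one_neg_one (μ : ℝ) (n : ℕ) :
    pMu μ (2 * n) 1 (-1) = ((∑ k ∈ range (2 * n + 1), (-1) ^ k * binomMu μ (2 * n) k : ℝ) : ℂ) := by
  rw [pMu, Complex.ofReal_sum]
  refine sum_congr rfl fun k hk ↦ ?_
  have hk : k ≤ 2 * n := Nat.lt_succ_iff.mp (mem_range.mp hk)
  have hsign : (-1 : ℂ) ^ (2 * n - k) = (-1) ^ k := by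
    rw [neg_one_pow_eq_pow_mod_two, neg_one_pow_eq_pow_mod_two (n := k)]
    congr 1
    omega
  rw [hsign]
  push_cast
  ring

lemma mul_sum_neg_one_pow_mul_binomMu {μ : ℝ} (hμ : -(1 / 2 : ℝ) < μ) (n : ℕ) :
    n * ∑ k ∈ range (2 * n + 1), (-1) ^ k * binomMu μ (2 * n) k =
      2 * μ * ∑ j ∈ range n, binomMu μ (2 * n) (2 * j + 1) := by
  set c : ℕ → ℝ := fun k ↦ binomMu μ (2 * n) k
  have htelescope : ∑ k ∈ range (2 * n + 1), (-1) ^ k * (natMu μ (2 * n - k) * c k) =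
      -∑ k ∈ range (2 * n + 1), (-1) ^ k * (natMu μ k * c k) := by
    simp_rw [c, ← natMu_mul_binomMu_succ hμ]
    exact sum_range_neg_one_pow_mul_succ (fun k ↦ natMu μ k * binomMu μ (2 * n) k)
      (by simp) (by rw [binomMu_natCast_of_lt μ (Nat.lt_succ_self _), mul_zero])
  have hterm : ∀ k ∈ range (2 * n + 1),
      (-1) ^ k * (natMu μ k * c k) + (-1) ^ k * (natMu μ (2 * n - k) * c k) =
        2 * n * ((-1) ^ k * c k) - 4 * μ * (if Odd k then c k else 0) := by
    intro k hk
    rw [← mul_add, ← add_mul, natMu_add_natMu_sub μ (Nat.lt_succ_iff.mp (mem_range.mp hk))]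
    rcases Nat.even_or_odd k with hk | hk
    · simp [hk.neg_one_pow, Nat.not_odd_iff_even.mpr hk]
    · simp only [hk.neg_one_pow, hk, ↓reduceIte, mul_one, neg_mul, one_mul]
      ring
  have hsum := sum_congr rfl hterm
  rw [sum_add_distrib, htelescope, add_neg_cancel, sum_sub_distrib, ← mul_sum, ← mul_sum,
    sum_range_two_mul_succ_ite_odd] at hsum
  have hodd : ∀ j : ℕ, c (2 * j + 1) = binomMu μ (2 * n) (2 * j + 1) := by simp [c]
  simp only [hodd] at hsum
  linear_combination -hsum / 2

theorem pMu_even_alt_sum_eq_odd_sum (μ : ℝ) (hμ : -(1/2 : ℝ) < μ) (n : ℕ) (hn : 1 ≤ n) :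
    pMu μ (2 * n) 1 (-1) =
      ((2 * μ / n * ∑ k ∈ Finset.range n, binomMu μ (2 * n) (2 * k + 1) : ℝ) : ℂ) := by
  have hn₀ : (n : ℝ) ≠ 0 := Nat.cast_ne_zero.mpr (by omega)
  rw [pMu_two_mul_one_neg_one, div_mul_eq_mul_div, ← mul_sum_neg_one_pow_mul_binomMu hμ,
    mul_div_cancel_left₀ _ hn₀]
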